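/- The K-vector space H of forests of planar rooted trees with operations * and ≻ is the free Hoch-algebra on one generator: for every Hoch-algebra (G, *_G, ≻_G) over K and every element g ∈ G, there exists a unique K-linear map φ : H → G such that φ(|) = g, φ(x * y) = φ(x) *_G φ(y) and φ(x ≻ y) = φ(x) ≻_G φ(y) for all x, y ∈ H. -/

import Mathlib

open scoped TensorProduct

/-- Planar rooted trees: a tree is either the leaf `|`, or a grafting of at
least two planar rooted trees (`graft t₁ t₂ rest` represents `[t₁, t₂, rest…]`). -/
inductive PTree : Type
  | leaf : PTree
  | graft (t₁ t₂ : PTree) (rest : List PTree) : PTree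

/-- A forest is a nonempty word of planar rooted trees. -/
abbrev Forest : Type := {l : List PTree // l ≠ []}

/-- Grafting of a list of trees (only meaningful on lists of length ≥ 2;
on shorter lists we return a junk value, which is never used). -/
def graftList : List PTree → PTree
  | [] => .leaf
  | [a] => a
  | a :: b :: rest => .graft a b rest

mutual
/-- Number of leaves of a planar rooted tree. -/
def leavesT : PTree → ℕ
  | .leaf => 1
  | .graft a b rest => leavesT a + leavesT b + leavesL rest

/-- Sum of the numbers of leaves of a list of trees. -/
def leavesL : List PTree → ℕ
  | [] => 0
  | t :: ts => leavesT t + leavesL ts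
end

/-- Number of leaves of a forest. -/
def leavesF (w : Forest) : ℕ := leavesL w.1

variable (K : Type*) [Field K]

/-- `H K` is the free `K`-vector space with basis the set of forests of
planar rooted trees. -/
abbrev H : Type _ := Forest →₀ K

/-- The leaf, as a (one-tree) forest. -/
def leafF : Forest := ⟨[PTree.leaf], by simp⟩

/-- The concatenation product `*`, as a bilinear map on `H K`;
on basis forests it is concatenation of words. -/
noncomputable def mulH : H K →ₗ[K] H K →ₗ[K] H K :=
  Finsupp.lift (H K →ₗ[K] H K) K Forest fun x =>
    Finsupp.lift (H K) K Forest fun y =>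
      Finsupp.single ⟨x.1 ++ y.1, by simp [x.2]⟩ 1

/-- The grafting operation `≻` on two basis forests:
`(t₁…tₚ) ≻ (s₁…s_q) = Σ_{k=1}^{q} Σ_{i=0}^{p−1}
t₁…t_{p−(i+1)} [t_{p−i},…,tₚ, s₁,…,s_k] s_{k+1}…s_q`. -/
noncomputable def succForest (x y : Forest) : H K :=
  ∑ k ∈ Finset.range y.1.length, ∑ i ∈ Finset.range x.1.length,
    Finsupp.single
      ⟨x.1.take (x.1.length - (i + 1)) ++
        (graftList (x.1.drop (x.1.length - (i + 1)) ++ y.1.take (k + 1)) :: y.1.drop (k + 1)),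
        by simp⟩ 1

/-- The operation `≻`, as a bilinear map on `H K`. -/
noncomputable def succH : H K →ₗ[K] H K →ₗ[K] H K :=
  Finsupp.lift (H K →ₗ[K] H K) K Forest fun x =>
    Finsupp.lift (H K) K Forest fun y => succForest K x y


/-!
The value of a forest under a morphism is forced. A word `t₁…tₙ` must go to the `m`-product
of the values of its trees, and since `[t₁] ≻ (t₂…tₙ) = Σ_k [t₁,…,t_{k+1}] t_{k+2}…tₙ`, whose
last summand is `[t₁,…,tₙ]`, the value of a grafting is forced by values on forests with fewer
leaves or on words of at least two trees. This gives uniqueness: the leaf generates `H K` under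
`*` and `≻`. For existence, define the values by these recursions. Compatibility with `*` is
associativity; compatibility with `≻` is proved by induction on the left word, the cocycle
relation rewriting `(t * x) ≻ y` through `t ≻ (x * y)`, `t * (x ≻ y)` and `(t ≻ x) * y`.
-/

theorem one_le_leavesT : ∀ t, 1 ≤ leavesT t
  | .leaf => le_rfl
  | .graft a _ _ => by have := one_le_leavesT a; simp only [leavesT]; omega

theorem one_le_leavesL {l : List PTree} (h : l ≠ []) : 1 ≤ leavesL l := by
  obtain ⟨t, ts, rfl⟩ := List.exists_cons_of_ne_nil h
  have := one_le_leavesT t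
  simp only [leavesL]
  omega

theorem leavesL_singleton (t : PTree) : leavesL [t] = leavesT t := by
  simp [leavesL]

theorem leavesL_append (a b : List PTree) : leavesL (a ++ b) = leavesL a + leavesL b := by
  induction a with
  | nil => simp [leavesL]
  | cons t ts ih => simp only [List.cons_append, leavesL, ih, add_assoc]

theorem leavesL_take_add_drop (l : List PTree) (n : ℕ) :
    leavesL (l.take n) + leavesL (l.drop n) = leavesL l := by
  rw [← leavesL_append, List.take_append_drop]

theorem leavesT_graft (a b : PTree) (rest : List PTree) :
    leavesT (.graft a b rest) = leavesT a + leavesL (b :: rest) := by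
  simp only [leavesT, leavesL, add_assoc]

theorem leavesT_graftList {l : List PTree} (h : 2 ≤ l.length) :
    leavesT (graftList l) = leavesL l := by
  match l, h with
  | a :: b :: rest, _ => rw [graftList, leavesT_graft, leavesL]; rfl

/-- The summand `t₁…t_{p-(i+1)} [t_{p-i},…,tₚ, s₁,…,s_{k+1}] s_{k+2}…s_q` of
`(t₁…tₚ) ≻ (s₁…s_q)`: `i` counts the trees of `x` from the right. -/
def graftWord (x y : List PTree) (i k : ℕ) : List PTree :=
  x.take (x.length - (i + 1)) ++
    graftList (x.drop (x.length - (i + 1)) ++ y.take (k + 1)) :: y.drop (k + 1)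

theorem graftWord_ne_nil (x y : List PTree) (i k : ℕ) : graftWord x y i k ≠ [] := by
  simp [graftWord]

theorem graftWord_cons_of_lt (t : PTree) {x : List PTree} (y : List PTree) {i : ℕ}
    (hi : i < x.length) (k : ℕ) : graftWord (t :: x) y i k = t :: graftWord x y i k := by
  rw [graftWord, graftWord, List.length_cons, Nat.sub_add_comm hi, List.take_succ_cons,
    List.drop_succ_cons, List.cons_append]

theorem graftWord_cons_length (t : PTree) (x y : List PTree) (k : ℕ) :
    graftWord (t :: x) y x.length k = graftList (t :: x ++ y.take (k + 1)) :: y.drop (k + 1) := by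
  simp [graftWord]

theorem leavesL_graftWord {x y : List PTree} {i : ℕ} (hi : i < x.length) (hy : y ≠ [])
    (k : ℕ) : leavesL (graftWord x y i k) = leavesL x + leavesL y := by
  have hlen : 2 ≤ (x.drop (x.length - (i + 1)) ++ y.take (k + 1)).length := by
    have := List.length_pos_of_ne_nil hy
    simp only [List.length_append, List.length_drop, List.length_take]
    omega
  rw [graftWord, leavesL_append, leavesL, leavesT_graftList hlen, leavesL_append,
    ← leavesL_take_add_drop x (x.length - (i + 1)), ← leavesL_take_add_drop y (k + 1)]
  omega

section Evaluation

variable {R G : Type*} [CommSemiring R] [AddCommGroup G] [Module R G]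
  (m s : G →ₗ[R] G →ₗ[R] G) (g : G)

mutual
noncomputable def evalTree : PTree → G
  | .leaf => g
  | .graft t₁ t₂ rest =>
      s (evalTree t₁) (evalList (t₂ :: rest)) -
        ∑ k ∈ (Finset.range rest.length).attach,
          m (evalTree (graftList (t₁ :: (t₂ :: rest).take (k.1 + 1))))
            (evalList ((t₂ :: rest).drop (k.1 + 1)))
termination_by t => 2 * leavesT t
decreasing_by
  all_goals
    have := one_le_leavesT t₁
    rw [leavesT_graft]
  · have := one_le_leavesL (l := t₂ :: rest) (by simp)
    omega
  · omega
  · have hk := Finset.mem_range.mp k.2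
    have := one_le_leavesL (l := (t₂ :: rest).drop (k.1 + 1)) (by simp; omega)
    have := leavesL_take_add_drop (t₂ :: rest) (k.1 + 1)
    rw [leavesT_graftList (by simp), leavesL]
    omega
  · have := one_le_leavesL (l := (t₂ :: rest).take (k.1 + 1)) (by simp)
    have := leavesL_take_add_drop (t₂ :: rest) (k.1 + 1)
    omega

noncomputable def evalList : List PTree → G
  | [] => 0
  | [t] => evalTree t
  | t :: ts => m (evalTree t) (evalList ts)
termination_by l => 2 * leavesL l + 1
decreasing_by
  all_goals
    have := one_le_leavesT t
    simp only [leavesL]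
    omega
end

theorem evalTree_leaf : evalTree m s g .leaf = g := by
  rw [evalTree]

theorem evalTree_graft (t₁ t₂ : PTree) (rest : List PTree) :
    evalTree m s g (.graft t₁ t₂ rest) =
      s (evalTree m s g t₁) (evalList m s g (t₂ :: rest)) -
        ∑ k ∈ Finset.range rest.length,
          m (evalTree m s g (graftList (t₁ :: (t₂ :: rest).take (k + 1))))
            (evalList m s g ((t₂ :: rest).drop (k + 1))) := by
  rw [evalTree, ← Finset.sum_attach (Finset.range rest.length)]

theorem evalList_singleton (t : PTree) : evalList m s g [t] = evalTree m s g t := by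
  rw [evalList]

theorem evalList_cons (t : PTree) {l : List PTree} (h : l ≠ []) :
    evalList m s g (t :: l) = m (evalTree m s g t) (evalList m s g l) := by
  obtain ⟨a, as, rfl⟩ := List.exists_cons_of_ne_nil h
  rw [evalList]
  exact h

theorem evalList_append (hassoc : ∀ x y z : G, m (m x y) z = m x (m y z))
    {a b : List PTree} (ha : a ≠ []) (hb : b ≠ []) :
    evalList m s g (a ++ b) = m (evalList m s g a) (evalList m s g b) := by
  induction a with
  | nil => exact absurd rfl ha
  | cons t ts ih =>
    rcases eq_or_ne ts [] with rfl | hts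
    · rw [List.singleton_append, evalList_cons m s g t hb, evalList_singleton]
    · rw [List.cons_append, evalList_cons m s g t (by simp [hts]), ih hts,
        evalList_cons m s g t hts, hassoc]

theorem s_evalTree (t : PTree) {y : List PTree} (hy : y ≠ []) :
    s (evalTree m s g t) (evalList m s g y) =
      ∑ k ∈ Finset.range y.length,
        evalList m s g (graftList (t :: y.take (k + 1)) :: y.drop (k + 1)) := by
  obtain ⟨a, ys, rfl⟩ := List.exists_cons_of_ne_nil hy
  have hlast : evalList m s g (graftList (t :: (a :: ys).take (ys.length + 1)) ::
      (a :: ys).drop (ys.length + 1)) = evalTree m s g (.graft t a ys) := by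
    simp [evalList_singleton, graftList]
  have hinit : ∀ k ∈ Finset.range ys.length,
      evalList m s g (graftList (t :: (a :: ys).take (k + 1)) :: (a :: ys).drop (k + 1)) =
        m (evalTree m s g (graftList (t :: (a :: ys).take (k + 1))))
          (evalList m s g ((a :: ys).drop (k + 1))) := fun k hk =>
    evalList_cons m s g _ (by simpa using Finset.mem_range.mp hk)
  rw [List.length_cons, Finset.sum_range_succ, hlast, evalTree_graft, Finset.sum_congr rfl hinit,
    add_sub_cancel]

theorem s_evalTree_mul_sub (hassoc : ∀ x y z : G, m (m x y) z = m x (m y z))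
    (t : PTree) {x y : List PTree} (hx : x ≠ []) (hy : y ≠ []) :
    s (evalTree m s g t) (m (evalList m s g x) (evalList m s g y)) -
        m (s (evalTree m s g t) (evalList m s g x)) (evalList m s g y) =
      ∑ k ∈ Finset.range y.length, evalList m s g (graftWord (t :: x) y x.length k) := by
  have hsplit : s (evalTree m s g t) (m (evalList m s g x) (evalList m s g y)) =
      ∑ j ∈ Finset.range x.length,
        evalList m s g (graftList (t :: x.take (j + 1)) :: (x.drop (j + 1) ++ y)) +
      ∑ k ∈ Finset.range y.length, evalList m s g (graftWord (t :: x) y x.length k) := by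
    rw [← evalList_append m s g hassoc hx hy, s_evalTree m s g t (by simp [hx]),
      List.length_append, Finset.sum_range_add]
    congr 1
    · refine Finset.sum_congr rfl fun j hj => ?_
      have hj : j + 1 ≤ x.length := Finset.mem_range.mp hj
      rw [List.take_append_of_le_length hj, List.drop_append_of_le_length hj]
    · refine Finset.sum_congr rfl fun k _ => ?_
      rw [graftWord_cons_length]
      simp [add_assoc, List.take_append, List.drop_append, List.take_of_length_le,
        List.drop_eq_nil_of_le]
  have hleft : m (s (evalTree m s g t) (evalList m s g x)) (evalList m s g y) =
      ∑ j ∈ Finset.range x.length,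
        evalList m s g (graftList (t :: x.take (j + 1)) :: (x.drop (j + 1) ++ y)) := by
    rw [s_evalTree m s g t hx, map_sum, LinearMap.sum_apply]
    refine Finset.sum_congr rfl fun j _ => ?_
    rw [← evalList_append m s g hassoc (List.cons_ne_nil _ _) hy, List.cons_append]
  rw [hsplit, hleft, add_sub_cancel_left]

theorem s_evalList (hassoc : ∀ x y z : G, m (m x y) z = m x (m y z))
    (hcocycle : ∀ x y z : G, m (s x y) z + s (m x y) z = s x (m y z) + m x (s y z))
    {x y : List PTree} (hx : x ≠ []) (hy : y ≠ []) :
    s (evalList m s g x) (evalList m s g y) =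
      ∑ k ∈ Finset.range y.length, ∑ i ∈ Finset.range x.length,
        evalList m s g (graftWord x y i k) := by
  induction x with
  | nil => exact absurd rfl hx
  | cons t x ih =>
    rcases eq_or_ne x [] with rfl | hx'
    · rw [evalList_singleton, s_evalTree m s g t hy]
      refine Finset.sum_congr rfl fun k _ => ?_
      rw [List.length_singleton, Finset.sum_range_one]
      exact congrArg _ (graftWord_cons_length t [] y k).symm
    · have hcons : ∀ k i, i < x.length →
          m (evalTree m s g t) (evalList m s g (graftWord x y i k)) =
            evalList m s g (graftWord (t :: x) y i k) := fun k i hi => by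
        rw [graftWord_cons_of_lt t y hi, evalList_cons m s g t (graftWord_ne_nil x y i k)]
      calc s (evalList m s g (t :: x)) (evalList m s g y)
          = m (evalTree m s g t) (s (evalList m s g x) (evalList m s g y)) +
              (s (evalTree m s g t) (m (evalList m s g x) (evalList m s g y)) -
                m (s (evalTree m s g t) (evalList m s g x)) (evalList m s g y)) := by
            rw [evalList_cons m s g t hx']
            linear_combination (norm := abel)
              hcocycle (evalTree m s g t) (evalList m s g x) (evalList m s g y)
        _ = ∑ k ∈ Finset.range y.length, (∑ i ∈ Finset.range x.length,
              evalList m s g (graftWord (t :: x) y i k) +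
                evalList m s g (graftWord (t :: x) y x.length k)) := by
            rw [ih hx', s_evalTree_mul_sub m s g hassoc t hx' hy, Finset.sum_add_distrib, map_sum]
            congr 1
            refine Finset.sum_congr rfl fun k _ => ?_
            rw [map_sum]
            exact Finset.sum_congr rfl fun i hi => hcons k i (Finset.mem_range.mp hi)
        _ = _ := by simp only [List.length_cons, Finset.sum_range_succ]

end Evaluation

theorem LinearMap.map_apply₂_of_single {R α M : Type*} [CommSemiring R] [AddCommMonoid M]
    [Module R M] (φ : (α →₀ R) →ₗ[R] M) (μ : (α →₀ R) →ₗ[R] (α →₀ R) →ₗ[R] α →₀ R)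
    (ν : M →ₗ[R] M →ₗ[R] M)
    (h : ∀ a b, φ (μ (Finsupp.single a 1) (Finsupp.single b 1)) =
      ν (φ (Finsupp.single a 1)) (φ (Finsupp.single b 1)))
    (x y : α →₀ R) : φ (μ x y) = ν (φ x) (φ y) := by
  have : μ.compr₂ φ = ν.compl₁₂ φ φ :=
    LinearMap.ext_basis Finsupp.basisSingleOne Finsupp.basisSingleOne (by simpa using h)
  exact LinearMap.congr_fun₂ this x y

theorem mulH_single_single (x y : Forest) :
    mulH K (Finsupp.single x 1) (Finsupp.single y 1) =
      Finsupp.single ⟨x.1 ++ y.1, by simp [x.2]⟩ 1 := by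
  simp [mulH]

theorem succH_single_single (x y : Forest) :
    succH K (Finsupp.single x 1) (Finsupp.single y 1) = succForest K x y := by
  simp [succH]

theorem succForest_eq_sum_graftWord (x y : Forest) :
    succForest K x y = ∑ k ∈ Finset.range y.1.length, ∑ i ∈ Finset.range x.1.length,
      Finsupp.single ⟨graftWord x.1 y.1 i k, graftWord_ne_nil _ _ _ _⟩ 1 :=
  rfl

theorem single_cons_eq_mulH (t : PTree) {l : List PTree} (hl : l ≠ []) :
    Finsupp.single (⟨t :: l, List.cons_ne_nil t l⟩ : Forest) (1 : K) =
      mulH K (Finsupp.single ⟨[t], List.cons_ne_nil t []⟩ 1) (Finsupp.single ⟨l, hl⟩ 1) := by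
  rw [mulH_single_single]
  rfl

theorem single_graft_eq_succH_sub (t₁ t₂ : PTree) (rest : List PTree) :
    Finsupp.single (⟨[.graft t₁ t₂ rest], List.cons_ne_nil _ _⟩ : Forest) (1 : K) =
      succH K (Finsupp.single ⟨[t₁], List.cons_ne_nil _ _⟩ 1)
          (Finsupp.single ⟨t₂ :: rest, List.cons_ne_nil _ _⟩ 1) -
        ∑ k ∈ Finset.range rest.length,
          Finsupp.single ⟨graftWord [t₁] (t₂ :: rest) 0 k, graftWord_ne_nil _ _ _ _⟩ 1 := by
  rw [eq_sub_iff_add_eq, succH_single_single, succForest_eq_sum_graftWord]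
  simp only [List.length_cons, List.length_nil, zero_add, Finset.sum_range_one]
  rw [Finset.sum_range_succ, add_comm]
  congr 3
  simp [graftWord, graftList]

section

variable {K}

theorem single_mem_of_leafF_mem {S : Submodule K (H K)} (hleaf : Finsupp.single leafF 1 ∈ S)
    (hmul : ∀ x ∈ S, ∀ y ∈ S, mulH K x y ∈ S) (hsucc : ∀ x ∈ S, ∀ y ∈ S, succH K x y ∈ S)
    (w : Forest) : Finsupp.single w 1 ∈ S := by
  suffices h : ∀ n, ∀ w : Forest, leavesF w = n → Finsupp.single w 1 ∈ S from h _ w rfl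
  intro n
  induction n using Nat.strong_induction_on with
  | _ n ih =>
  have hword : ∀ w : Forest, 2 ≤ w.1.length → leavesF w = n → Finsupp.single w 1 ∈ S := by
    rintro ⟨_ | ⟨t, _ | ⟨t', l⟩⟩, hw⟩ hlen rfl
    · exact absurd rfl hw
    · simp at hlen
    have := one_le_leavesT t
    have := one_le_leavesT t'
    rw [single_cons_eq_mulH K t (List.cons_ne_nil t' l)]
    refine hmul _ (ih _ ?_ _ rfl) _ (ih _ ?_ _ rfl) <;> simp only [leavesF, leavesL] <;> omega
  rintro ⟨_ | ⟨t, _ | ⟨t', l⟩⟩, hw⟩ rfl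
  · exact absurd rfl hw
  · cases t with
    | leaf => exact hleaf
    | graft t₁ t₂ rest =>
      have := one_le_leavesT t₁
      have := one_le_leavesL (List.cons_ne_nil t₂ rest)
      have hlt₁ : leavesL [t₁] < leavesL [.graft t₁ t₂ rest] := by
        simp only [leavesL_singleton, leavesT_graft]
        omega
      have hlt₂ : leavesL (t₂ :: rest) < leavesL [.graft t₁ t₂ rest] := by
        simp only [leavesL_singleton, leavesT_graft]
        omega
      rw [single_graft_eq_succH_sub]
      refine S.sub_mem (hsucc _ (ih _ hlt₁ _ rfl) _ (ih _ hlt₂ _ rfl)) (S.sum_mem fun k hk => ?_)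
      have hk := Finset.mem_range.mp hk
      refine hword _ (by simp [graftWord]; omega) ?_
      simp only [leavesF]
      rw [leavesL_graftWord (by simp) (List.cons_ne_nil t₂ rest), leavesL_singleton,
        leavesL_singleton, leavesT_graft]
  · exact hword _ (by simp) rfl

theorem hom_ext_of_leafF {G : Type*} [AddCommGroup G] [Module K G] {m s : G →ₗ[K] G →ₗ[K] G}
    {ψ₁ ψ₂ : H K →ₗ[K] G} (hleaf : ψ₁ (Finsupp.single leafF 1) = ψ₂ (Finsupp.single leafF 1))
    (hmul₁ : ∀ x y, ψ₁ (mulH K x y) = m (ψ₁ x) (ψ₁ y))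
    (hmul₂ : ∀ x y, ψ₂ (mulH K x y) = m (ψ₂ x) (ψ₂ y))
    (hsucc₁ : ∀ x y, ψ₁ (succH K x y) = s (ψ₁ x) (ψ₁ y))
    (hsucc₂ : ∀ x y, ψ₂ (succH K x y) = s (ψ₂ x) (ψ₂ y)) : ψ₁ = ψ₂ := by
  refine Finsupp.basisSingleOne.ext fun w => ?_
  simpa using single_mem_of_leafF_mem (S := LinearMap.eqLocus ψ₁ ψ₂) hleaf
    (fun x hx y hy => by simp_all) (fun x hx y hy => by simp_all) w

variable {G : Type*} [AddCommGroup G] [Module K G] (m s : G →ₗ[K] G →ₗ[K] G) (g : G)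

noncomputable def evalH : H K →ₗ[K] G :=
  Finsupp.linearCombination K fun w : Forest => evalList m s g w.1

theorem evalH_single (w : Forest) : evalH m s g (Finsupp.single w 1) = evalList m s g w.1 := by
  simp [evalH]

theorem evalH_leafF : evalH m s g (Finsupp.single leafF 1) = g := by
  rw [evalH_single, leafF, evalList_singleton, evalTree_leaf]

theorem evalH_mulH (hassoc : ∀ x y z : G, m (m x y) z = m x (m y z)) (x y : H K) :
    evalH m s g (mulH K x y) = m (evalH m s g x) (evalH m s g y) := by
  refine LinearMap.map_apply₂_of_single _ _ _ (fun a b => ?_) x y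
  rw [mulH_single_single, evalH_single, evalH_single, evalH_single,
    evalList_append m s g hassoc a.2 b.2]

theorem evalH_succH (hassoc : ∀ x y z : G, m (m x y) z = m x (m y z))
    (hcocycle : ∀ x y z : G, m (s x y) z + s (m x y) z = s x (m y z) + m x (s y z))
    (x y : H K) : evalH m s g (succH K x y) = s (evalH m s g x) (evalH m s g y) := by
  refine LinearMap.map_apply₂_of_single _ _ _ (fun a b => ?_) x y
  simp only [succH_single_single, succForest_eq_sum_graftWord, map_sum, evalH_single]
  exact (s_evalList m s g hassoc hcocycle a.2 b.2).symm

end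

/-- `(H K, *, ≻)` is the free Hoch-algebra on one generator: for
every Hoch-algebra `(G, m, s)` over `K` and every `g ∈ G`, there is a unique linear
map `φ : H K → G` sending the leaf to `g` and respecting both operations. -/
theorem stmt2 (K : Type*) [Field K] (G : Type*) [AddCommGroup G] [Module K G]
    (m s : G →ₗ[K] G →ₗ[K] G)
    (hassoc : ∀ x y z : G, m (m x y) z = m x (m y z))
    (hcocycle : ∀ x y z : G,
      m (s x y) z + s (m x y) z = s x (m y z) + m x (s y z))
    (g : G) :
    ∃! φ : H K →ₗ[K] G,
      φ (Finsupp.single leafF 1) = g ∧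
      (∀ x y : H K, φ (mulH K x y) = m (φ x) (φ y)) ∧
      (∀ x y : H K, φ (succH K x y) = s (φ x) (φ y)) := by
  refine ⟨evalH m s g, ⟨evalH_leafF m s g, evalH_mulH m s g hassoc,
    evalH_succH m s g hassoc hcocycle⟩, ?_⟩
  rintro ψ ⟨hleaf, hmul, hsucc⟩
  exact hom_ext_of_leafF (hleaf.trans (evalH_leafF m s g).symm) hmul
    (evalH_mulH m s g hassoc) hsucc (evalH_succH m s g hassoc hcocycle)
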